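/- arXiv:2412.20993 — 3 statements merged into one kernel-verified Lean document; each statement's English description precedes it below -/
import Mathlib

section
/- Let α be any type, f : ℕ → α a sequence, i ∈ ℕ, and k ≥ 1. Suppose f(i+j) = f(i+j+k) for every j with 1 ≤ j ≤ k, and f(i+j) = f(i+j+k−1) for every j with 1 ≤ j ≤ k−1. Then f is constant on the indices i+1, …, i+2k−1; that is, f(i+j) = f(i+l) for all j, l with 1 ≤ j, l ≤ 2k−1. -/
/-!
Chaining the two periods through a common vertex, `g (j + k - 1) = g j = g (j + k)`, shows that
consecutive indices `n, n + 1` in `[k, 2k - 1]` carry equal values, so `g` is constant there; every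
index `m < k` is then joined to that block by the period-`k` edge `m ~ m + k`.
-/

theorem eq_of_forall_eq_succ {α : Type*} {f : ℕ → α} {a b : ℕ}
    (h : ∀ n, a ≤ n → n < b → f n = f (n + 1)) : ∀ m, a ≤ m → m ≤ b → f m = f a := by
  intro m ham
  induction m, ham using Nat.le_induction with
  | base => exact fun _ => rfl
  | succ n han ih => exact fun hnb => (h n han (by omega)).symm.trans (ih (by omega))

section TwoPeriods

variable {α : Type*} {g : ℕ → α} {k : ℕ}

theorem eq_succ_of_two_periods (h1 : ∀ j, 1 ≤ j → j ≤ k → g j = g (j + k))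
    (h2 : ∀ j, 1 ≤ j → j ≤ k - 1 → g j = g (j + (k - 1))) :
    ∀ n, k ≤ n → n < 2 * k - 1 → g n = g (n + 1) := by
  intro n hkn hn
  obtain ⟨j, rfl⟩ : ∃ j, n = j + (k - 1) := ⟨n - (k - 1), by omega⟩
  calc g (j + (k - 1)) = g j := (h2 j (by omega) (by omega)).symm
    _ = g (j + k) := h1 j (by omega) (by omega)
    _ = g (j + (k - 1) + 1) := by congr 1; omega

theorem eq_of_two_periods (h1 : ∀ j, 1 ≤ j → j ≤ k → g j = g (j + k))
    (h2 : ∀ j, 1 ≤ j → j ≤ k - 1 → g j = g (j + (k - 1))) :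
    ∀ m, 1 ≤ m → m ≤ 2 * k - 1 → g m = g k := by
  have hblock := eq_of_forall_eq_succ (eq_succ_of_two_periods h1 h2)
  intro m hm1 hm2
  rcases le_or_gt k m with hkm | hmk
  · exact hblock m hkm hm2
  · rw [h1 m hm1 hmk.le]
    exact hblock (m + k) (by omega) (by omega)

end TwoPeriods

theorem constant_of_two_periods_general {α : Type*} (f : ℕ → α) (i k : ℕ)
    (h1 : ∀ j, 1 ≤ j → j ≤ k → f (i + j) = f (i + j + k))
    (h2 : ∀ j, 1 ≤ j → j ≤ k - 1 → f (i + j) = f (i + j + (k - 1))) :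
    ∀ j l, 1 ≤ j → j ≤ 2 * k - 1 → 1 ≤ l → l ≤ 2 * k - 1 → f (i + j) = f (i + l) := by
  have key := eq_of_two_periods (g := fun n => f (i + n)) (k := k)
    (fun j hj hjk => by simpa only [add_assoc] using h1 j hj hjk)
    (fun j hj hjk => by simpa only [add_assoc] using h2 j hj hjk)
  intro j l hj1 hj2 hl1 hl2
  exact (key j hj1 hj2).trans (key l hl1 hl2).symm

/-- **Connectivity step.** If a sequence `f : ℕ → α` satisfies
`f (i+j) = f (i+j+k)` for all `1 ≤ j ≤ k` and `f (i+j) = f (i+j+(k-1))` for all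
`1 ≤ j ≤ k-1` (with `k ≥ 1`), then `f` is constant on the indices
`i+1, …, i+2k-1`: `f (i+j) = f (i+l)` for all `1 ≤ j, l ≤ 2k-1`. -/
theorem constant_of_two_periods {α : Type*} (f : ℕ → α) (i k : ℕ) (hk : 1 ≤ k)
    (h1 : ∀ j, 1 ≤ j → j ≤ k → f (i + j) = f (i + j + k))
    (h2 : ∀ j, 1 ≤ j → j ≤ k - 1 → f (i + j) = f (i + j + (k - 1))) :
    ∀ j l, 1 ≤ j → j ≤ 2 * k - 1 → 1 ≤ l → l ≤ 2 * k - 1 → f (i + j) = f (i + l) :=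
  constant_of_two_periods_general f i k h1 h2
end

section
/- (Lemma 2, mixture stability implies pointwise stability.) Let P : ℕ → (Fin M → ℝ) be a sequence of probability mass functions on M answer groups, let i ∈ ℕ and k ≥ 1, and define the mixtures P̄_a^{a+w} = (1/w)·∑_{j=1}^{w} P_{a+j}. If TV(P̄_i^{i+k}, P̄_{i+j}^{i+j+k}) = 0 for every j with 1 ≤ j ≤ k, and TV(P̄_i^{i+k−1}, P̄_{i+j}^{i+j+k−1}) = 0 for every j with 1 ≤ j ≤ k−1, then P_j = P_l for all indices j, l with i+1 ≤ j, l ≤ i+2k−1. -/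
/-!
Equal mixtures of equal width have equal sums, and equal sums over the windows of width `w`
starting at `n` and at `n + 1` force `P (n + w) = P n`. The hypotheses thus give `P` the period
`k` on `[i + 1, i + k]` and the period `k - 1` on `[i + 1, i + k - 1]`. Two consecutive periods
make consecutive values agree on `[i + k, i + 2k - 1]`, since `P (m + k) = P m = P (m + k - 1)`,
and the period `k` moves the rest of the range into that block.
-/

/-- Total variation distance between two functions `Fin M → ℝ`
(e.g. probability mass functions on `M` answer groups):
`TV(Q, R) = (1/2) ∑ s, |Q s - R s|`. -/
noncomputable def tvDist {M : ℕ} (Q R : Fin M → ℝ) : ℝ :=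
  (1 / 2) * ∑ s, |Q s - R s|

/-- The mixture of the window of width `w` starting after index `a`:
`P̄_a^{a+w} = (1/w) • ∑_{j=1}^{w} P (a + j)`. -/
noncomputable def windowMix {M : ℕ} (P : ℕ → Fin M → ℝ) (a w : ℕ) : Fin M → ℝ :=
  (1 / (w : ℝ)) • ∑ j ∈ Finset.Icc 1 w, P (a + j)

open Finset

theorem eq_of_tvDist_eq_zero {M : ℕ} {Q R : Fin M → ℝ} (h : tvDist Q R = 0) : Q = R := by
  have hsum : ∑ s, |Q s - R s| = 0 := by
    unfold tvDist at h
    linarith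
  funext s
  have hs := (sum_eq_zero_iff_of_nonneg fun t _ => abs_nonneg (Q t - R t)).mp hsum s (mem_univ s)
  exact sub_eq_zero.mp (abs_eq_zero.mp hs)

theorem windowMix_eq_smul_sum_range {M : ℕ} (P : ℕ → Fin M → ℝ) (a w : ℕ) :
    windowMix P a w = (w : ℝ)⁻¹ • ∑ t ∈ range w, P (a + 1 + t) := by
  rw [windowMix, one_div, ← Ico_add_one_right_eq_Icc, sum_Ico_eq_sum_range, Nat.add_sub_cancel]
  simp only [add_assoc]

theorem sum_range_eq_of_windowMix_eq {M : ℕ} {P : ℕ → Fin M → ℝ} {a b w : ℕ} (hw : w ≠ 0)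
    (h : windowMix P a w = windowMix P b w) :
    ∑ t ∈ range w, P (a + 1 + t) = ∑ t ∈ range w, P (b + 1 + t) := by
  rw [windowMix_eq_smul_sum_range, windowMix_eq_smul_sum_range] at h
  exact smul_right_injective _ (inv_ne_zero (Nat.cast_ne_zero.mpr hw)) h

section WindowSums

variable {E : Type*} [AddCancelCommMonoid E] {f : ℕ → E}

theorem apply_add_eq_of_window_sums_eq {n w : ℕ}
    (h : ∑ t ∈ range w, f (n + t) = ∑ t ∈ range w, f (n + 1 + t)) : f (n + w) = f n := by
  have hsucc : ∑ t ∈ range w, f (n + t) + f (n + w) = ∑ t ∈ range w, f (n + 1 + t) + f n := by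
    rw [← sum_range_succ (fun t => f (n + t)), sum_range_succ', add_zero]
    simp only [add_right_comm n, add_assoc]
  rw [h] at hsucc
  exact add_left_cancel hsucc

theorem apply_add_eq_of_window_sums_const {a w : ℕ}
    (h : ∀ j ≤ w, ∑ t ∈ range w, f (a + j + t) = ∑ t ∈ range w, f (a + t))
    {n : ℕ} (hn : a ≤ n) (hnw : n < a + w) : f (n + w) = f n := by
  apply apply_add_eq_of_window_sums_eq
  obtain ⟨j, rfl⟩ := Nat.exists_eq_add_of_le hn
  rw [h j (by omega), show a + j + 1 = a + (j + 1) by omega, h (j + 1) (by omega)]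

end WindowSums

theorem apply_add_eq_of_windowMix_eq {M : ℕ} {P : ℕ → Fin M → ℝ} {i w : ℕ}
    (h : ∀ j, 1 ≤ j → j ≤ w → windowMix P i w = windowMix P (i + j) w)
    {n : ℕ} (hn : i + 1 ≤ n) (hnw : n ≤ i + w) : P (n + w) = P n := by
  refine apply_add_eq_of_window_sums_const (fun j hj => ?_) hn (by omega)
  rcases Nat.eq_zero_or_pos j with rfl | hj0
  · rw [add_zero]
  · rw [add_right_comm]
    exact (sum_range_eq_of_windowMix_eq (by omega) (h j hj0 hj)).symm

section Periods

variable {α : Type*} {f : ℕ → α}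

theorem apply_eq_of_apply_succ_eq {a b : ℕ} (h : ∀ m, a ≤ m → m < b → f (m + 1) = f m)
    {n : ℕ} (han : a ≤ n) (hnb : n ≤ b) : f n = f a := by
  induction n, han using Nat.le_induction with
  | base => rfl
  | succ m ham ih => rw [h m ham (by omega), ih (by omega)]

theorem apply_eq_of_consecutive_periods {a p : ℕ}
    (hlong : ∀ n, a ≤ n → n ≤ a + p → f (n + (p + 1)) = f n)
    (hshort : ∀ n, a ≤ n → n < a + p → f (n + p) = f n)
    {n : ℕ} (han : a ≤ n) (hn : n ≤ a + 2 * p) : f n = f (a + p) := by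
  have hblock : ∀ m, a + p ≤ m → m ≤ a + 2 * p → f m = f (a + p) := by
    refine fun m hm hm' => apply_eq_of_apply_succ_eq (fun c hc hc' => ?_) hm hm'
    obtain ⟨d, rfl⟩ := Nat.exists_eq_add_of_le hc
    have hlong' := hlong (a + d) (by omega) (by omega)
    have hshort' := hshort (a + d) (by omega) (by omega)
    rw [show a + p + d + 1 = a + d + (p + 1) by omega, hlong', ← hshort', add_right_comm]
  rcases le_or_gt (a + p) n with hpn | hnp
  · exact hblock n hpn hn
  · rw [← hlong n han hnp.le, hblock _ (by omega) (by omega)]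

end Periods

theorem pointwise_stable_of_mixture_stable_general {M : ℕ} (P : ℕ → Fin M → ℝ)
    (i k : ℕ)
    (h1 : ∀ j, 1 ≤ j → j ≤ k → tvDist (windowMix P i k) (windowMix P (i + j) k) = 0)
    (h2 : ∀ j, 1 ≤ j → j ≤ k - 1 →
      tvDist (windowMix P i (k - 1)) (windowMix P (i + j) (k - 1)) = 0) :
    ∀ j l, i + 1 ≤ j → j ≤ i + 2 * k - 1 → i + 1 ≤ l → l ≤ i + 2 * k - 1 →
      P j = P l := by
  intro j l hj hj' hl hl'
  obtain _ | p := k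
  · omega
  rw [Nat.add_sub_cancel] at h2
  have hlong : ∀ n, i + 1 ≤ n → n ≤ i + 1 + p → P (n + (p + 1)) = P n := fun n hn hn' =>
    apply_add_eq_of_windowMix_eq (fun j hj hj' => eq_of_tvDist_eq_zero (h1 j hj hj')) hn
      (by omega)
  have hshort : ∀ n, i + 1 ≤ n → n < i + 1 + p → P (n + p) = P n := fun n hn hn' =>
    apply_add_eq_of_windowMix_eq (fun j hj hj' => eq_of_tvDist_eq_zero (h2 j hj hj')) hn
      (by omega)
  rw [apply_eq_of_consecutive_periods hlong hshort hj (by omega),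
    apply_eq_of_consecutive_periods hlong hshort hl (by omega)]

/-- **Lemma 2: mixture stability implies pointwise stability.**
Let `P : ℕ → (Fin M → ℝ)` be a sequence of probability mass functions on `M` answer
groups, `i ∈ ℕ` and `k ≥ 1`.  If `TV(P̄_i^{i+k}, P̄_{i+j}^{i+j+k}) = 0` for every
`1 ≤ j ≤ k` and `TV(P̄_i^{i+k-1}, P̄_{i+j}^{i+j+k-1}) = 0` for every `1 ≤ j ≤ k-1`,
then `P j = P l` for all indices `j, l` with `i+1 ≤ j, l ≤ i+2k-1`. -/
theorem pointwise_stable_of_mixture_stable {M : ℕ} (P : ℕ → Fin M → ℝ)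
    (hpos : ∀ n s, 0 ≤ P n s) (hsum : ∀ n, ∑ s, P n s = 1)
    (i k : ℕ) (hk : 1 ≤ k)
    (h1 : ∀ j, 1 ≤ j → j ≤ k → tvDist (windowMix P i k) (windowMix P (i + j) k) = 0)
    (h2 : ∀ j, 1 ≤ j → j ≤ k - 1 →
      tvDist (windowMix P i (k - 1)) (windowMix P (i + j) (k - 1)) = 0) :
    ∀ j l, i + 1 ≤ j → j ≤ i + 2 * k - 1 → i + 1 ≤ l → l ≤ i + 2 * k - 1 →
      P j = P l :=
  pointwise_stable_of_mixture_stable_general P i k h1 h2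
end

section
/- With the probe setup below, fix a start index l ∈ ℕ, a window length t ≥ 1, and ε > 0. Then μ( TV(P̄_l^{l+t}, P̂_l^{l+t}) ≥ ε ) ≤ 2^{M+1}·exp(−t·ε²/2), where the total variation distance is the supremum of |P̄_l^{l+t}(S) − P̂_l^{l+t}(S)| over all 2^M subsets S ⊆ Fin M. -/
/-!
Each increment `p^S_τ − Z^S_τ` lies in `[-1, 1]` and has conditional mean zero given `𝓕_{τ-1}`;
by convexity of `exp` its conditional moment generating function is at most
`cosh s ≤ exp (s² / 2)`. Peeling off one increment at a time (Azuma–Hoeffding) makes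
`t · (P̄ − P̂)(S)` sub-Gaussian with variance proxy `t`, so the Chernoff bound gives
`2 exp (−t ε² / 2)` for each `S`, and a union bound over the `2^M` subsets finishes.
-/

open MeasureTheory Finset

/-- Probe indicator: `Z^S_τ ω = 𝟙{Y τ ω ∈ S}`, as a real number. -/
noncomputable def probeZ {Ω : Type*} {M : ℕ} (Y : ℕ → Ω → Fin M)
    (S : Finset (Fin M)) (τ : ℕ) (ω : Ω) : ℝ :=
  if Y τ ω ∈ S then 1 else 0

/-- Conditional probability of the probe event given the past:
`p^S_τ = E[Z^S_τ ∣ 𝓕_{τ-1}]`. -/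
noncomputable def probeP {Ω : Type*} {m0 : MeasurableSpace Ω} (μ : Measure Ω) {M : ℕ}
    (ℱ : Filtration ℕ m0) (Y : ℕ → Ω → Fin M) (S : Finset (Fin M)) (τ : ℕ) : Ω → ℝ :=
  μ[probeZ Y S τ | ℱ (τ - 1)]

/-- Empirical mixture: `P̂_l^{l+t}(S) = (1/t) ∑_{τ=l+1}^{l+t} Z^S_τ`. -/
noncomputable def empMix {Ω : Type*} {M : ℕ} (Y : ℕ → Ω → Fin M)
    (l t : ℕ) (S : Finset (Fin M)) (ω : Ω) : ℝ :=
  (1 / (t : ℝ)) * ∑ τ ∈ Icc (l + 1) (l + t), probeZ Y S τ ω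

/-- True mixture: `P̄_l^{l+t}(S) = (1/t) ∑_{τ=l+1}^{l+t} p^S_τ`. -/
noncomputable def trueMix {Ω : Type*} {m0 : MeasurableSpace Ω} (μ : Measure Ω) {M : ℕ}
    (ℱ : Filtration ℕ m0) (Y : ℕ → Ω → Fin M)
    (l t : ℕ) (S : Finset (Fin M)) (ω : Ω) : ℝ :=
  (1 / (t : ℝ)) * ∑ τ ∈ Icc (l + 1) (l + t), probeP μ ℱ Y S τ ω

/-- Total variation distance between the true and the empirical mixture, as the
supremum over all `2^M` subsets `S ⊆ Fin M` of `|P̄_l^{l+t}(S) − P̂_l^{l+t}(S)|`. -/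
noncomputable def tvMix {Ω : Type*} {m0 : MeasurableSpace Ω} (μ : Measure Ω) {M : ℕ}
    (ℱ : Filtration ℕ m0) (Y : ℕ → Ω → Fin M) (l t : ℕ) (ω : Ω) : ℝ :=
  ⨆ S : Finset (Fin M), |trueMix μ ℱ Y l t S ω - empMix Y l t S ω|

open ProbabilityTheory Real
open scoped NNReal

theorem setOf_le_iSup_subset_iUnion {α ι β : Type*} [ConditionallyCompleteLinearOrder β]
    [Finite ι] [Nonempty ι] (f : ι → α → β) (ε : β) :
    {x | ε ≤ ⨆ i, f i x} ⊆ ⋃ i, {x | ε ≤ f i x} := by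
  intro x hx
  obtain ⟨i, hi⟩ := exists_eq_ciSup_of_finite (f := fun i => f i x)
  exact Set.mem_iUnion.2 ⟨i, show ε ≤ f i x from hi ▸ hx⟩

section Conditional

variable {Ω : Type*} {m m0 : MeasurableSpace Ω} {μ : Measure Ω} {X : Ω → ℝ}

theorem condExp_exp_mul_le_of_abs_le_one [IsFiniteMeasure μ] (hm : m ≤ m0)
    (hX : AEStronglyMeasurable X μ) (hX₁ : ∀ᵐ ω ∂μ, |X ω| ≤ 1) (hX₀ : μ[X|m] =ᵐ[μ] 0) (s : ℝ) :
    μ[fun ω => exp (s * X ω)|m] ≤ᵐ[μ] fun _ => exp (s ^ 2 / 2) := by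
  have hXint : Integrable X μ := .of_bound hX 1 (by simpa using hX₁)
  have hlin : μ[fun _ => cosh s|m] + μ[sinh s • X|m] =ᵐ[μ] fun _ => cosh s := by
    filter_upwards [condExp_smul (sinh s) X m, hX₀] with ω hsmul hzero
    simp [condExp_const hm, hsmul, hzero]
  calc μ[fun ω => exp (s * X ω)|m]
      ≤ᵐ[μ] μ[(fun _ => cosh s) + sinh s • X|m] :=
        condExp_mono (integrable_exp_mul_of_mem_Icc hX.aemeasurable
            (by filter_upwards [hX₁] with ω h using abs_le.1 h))
          ((integrable_const _).add (hXint.smul _))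
          (by
            filter_upwards [hX₁] with ω h
            simpa [mul_comm] using exp_mul_le_cosh_add_mul_sinh h s)
    _ =ᵐ[μ] μ[fun _ => cosh s|m] + μ[sinh s • X|m] :=
        condExp_add (integrable_const _) (hXint.smul _) m
    _ =ᵐ[μ] fun _ => cosh s := hlin
    _ ≤ᵐ[μ] fun _ => exp (s ^ 2 / 2) := ae_of_all _ fun _ => cosh_le_exp_half_sq s

namespace ProbabilityTheory.HasSubgaussianMGF

theorem add_of_condExp_exp_mul_le [IsFiniteMeasure μ] {Y : Ω → ℝ} {cY cX : ℝ≥0} (hm : m ≤ m0)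
    (hY : HasSubgaussianMGF Y cY μ) (hYm : StronglyMeasurable[m] Y)
    (hX : AEStronglyMeasurable X μ) {C : ℝ} (hXC : ∀ᵐ ω ∂μ, |X ω| ≤ C)
    (hXc : ∀ s, μ[fun ω => exp (s * X ω)|m] ≤ᵐ[μ] fun _ => exp (cX * s ^ 2 / 2)) :
    HasSubgaussianMGF (fun ω => Y ω + X ω) (cY + cX) μ := by
  have hsplit (s : ℝ) : (fun ω => exp (s * (Y ω + X ω))) =
      (fun ω => exp (s * Y ω)) * fun ω => exp (s * X ω) := by
    ext ω; simp [mul_add, exp_add]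
  have hXint (s : ℝ) : Integrable (fun ω => exp (s * X ω)) μ :=
    integrable_exp_mul_of_mem_Icc hX.aemeasurable
      (by filter_upwards [hXC] with ω h using abs_le.1 h)
  have hint (s : ℝ) : Integrable (fun ω => exp (s * (Y ω + X ω))) μ := by
    rw [hsplit]
    refine (hY.integrable_exp_mul s).mul_bdd (hXint s).aestronglyMeasurable (c := exp (|s| * C)) ?_
    filter_upwards [hXC] with ω h
    rw [norm_of_nonneg (exp_pos _).le, exp_le_exp]
    exact (le_abs_self _).trans (by rw [abs_mul]; gcongr)
  refine ⟨hint, fun s => ?_⟩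
  have hpull : μ[fun ω => exp (s * (Y ω + X ω))|m] =ᵐ[μ]
      (fun ω => exp (s * Y ω)) * μ[fun ω => exp (s * X ω)|m] := by
    rw [hsplit]
    exact condExp_mul_of_stronglyMeasurable_left
      (continuous_exp.comp_stronglyMeasurable (hYm.const_mul s)) (hsplit s ▸ hint s) (hXint s)
  calc mgf (fun ω => Y ω + X ω) μ s
      = ∫ ω, μ[fun ω => exp (s * (Y ω + X ω))|m] ω ∂μ := (integral_condExp hm).symm
    _ ≤ ∫ ω, exp (s * Y ω) * exp (cX * s ^ 2 / 2) ∂μ := by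
        refine integral_mono_ae integrable_condExp
          ((hY.integrable_exp_mul s).mul_const _) ?_
        filter_upwards [hpull, hXc s] with ω hω hle
        rw [hω]
        exact mul_le_mul_of_nonneg_left hle (exp_pos _).le
    _ = mgf Y μ s * exp (cX * s ^ 2 / 2) := integral_mul_const _ _
    _ ≤ exp (cY * s ^ 2 / 2) * exp (cX * s ^ 2 / 2) := by gcongr; exact hY.mgf_le s
    _ = exp ((cY + cX : ℝ≥0) * s ^ 2 / 2) := by rw [← exp_add]; push_cast; ring_nf

theorem sum_Icc_of_condExp_ae_eq_zero [IsProbabilityMeasure μ]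
    {ℱ : Filtration ℕ m0} {X : ℕ → Ω → ℝ} (hX : StronglyAdapted ℱ X)
    (hX₁ : ∀ i, ∀ᵐ ω ∂μ, |X i ω| ≤ 1) (hX₀ : ∀ i, μ[X (i + 1)|ℱ i] =ᵐ[μ] 0) (l n : ℕ) :
    HasSubgaussianMGF (fun ω => ∑ i ∈ Icc (l + 1) (l + n), X i ω) n μ := by
  induction n with
  | zero => simp
  | succ n ih =>
    have hX' (i : ℕ) : AEStronglyMeasurable (X i) μ :=
      ((hX i).mono (ℱ.le i)).aestronglyMeasurable
    simp_rw [← add_assoc, sum_Icc_succ_top (by omega : l + 1 ≤ l + n + 1), Nat.cast_succ]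
    refine ih.add_of_condExp_exp_mul_le (ℱ.le (l + n)) ?_ (hX' _) (hX₁ _) fun s => ?_
    · refine stronglyMeasurable_fun_sum _ fun i hi => (hX i).mono (ℱ.mono ?_)
      exact (mem_Icc.1 hi).2
    · simpa using condExp_exp_mul_le_of_abs_le_one (ℱ.le _) (hX' _) (hX₁ _) (hX₀ _) s

theorem measure_abs_ge_le [IsFiniteMeasure μ] {c : ℝ≥0} (h : HasSubgaussianMGF X c μ) {ε : ℝ}
    (hε : 0 ≤ ε) :
    μ {ω | ε ≤ |X ω|} ≤ 2 * ENNReal.ofReal (exp (-ε ^ 2 / (2 * c))) := by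
  have hcover : {ω | ε ≤ |X ω|} = {ω | ε ≤ X ω} ∪ {ω | ε ≤ (-X) ω} := by
    ext ω; simp [le_abs]
  calc μ {ω | ε ≤ |X ω|} ≤ μ {ω | ε ≤ X ω} + μ {ω | ε ≤ (-X) ω} :=
        hcover ▸ measure_union_le _ _
    _ ≤ ENNReal.ofReal (exp (-ε ^ 2 / (2 * c))) + ENNReal.ofReal (exp (-ε ^ 2 / (2 * c))) := by
        rw [← ofReal_measureReal, ← ofReal_measureReal]
        gcongr
        exacts [h.measure_ge_le hε, h.neg.measure_ge_le hε]
    _ = 2 * ENNReal.ofReal (exp (-ε ^ 2 / (2 * c))) := (two_mul _).symm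

end ProbabilityTheory.HasSubgaussianMGF

end Conditional

theorem probeZ_mem_Icc {Ω : Type*} {M : ℕ} (Y : ℕ → Ω → Fin M) (S : Finset (Fin M)) (τ : ℕ)
    (ω : Ω) : probeZ Y S τ ω ∈ Set.Icc 0 1 := by
  unfold probeZ; split_ifs <;> simp

section Probe

variable {Ω : Type*} {m0 : MeasurableSpace Ω} {μ : Measure Ω} {ℱ : Filtration ℕ m0} {M : ℕ}
  {Y : ℕ → Ω → Fin M}

theorem stronglyAdapted_probeZ (hY : ∀ τ, Measurable[ℱ τ] (Y τ)) (S : Finset (Fin M)) :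
    StronglyAdapted ℱ (probeZ Y S) := fun τ =>
  ((measurable_of_countable fun y : Fin M => if y ∈ S then (1 : ℝ) else 0).comp
    (hY τ)).stronglyMeasurable

theorem probeP_mem_Icc (S : Finset (Fin M)) (τ : ℕ) :
    ∀ᵐ ω ∂μ, probeP μ ℱ Y S τ ω ∈ Set.Icc 0 1 := by
  have h₀ : 0 ≤ᵐ[μ] probeP μ ℱ Y S τ :=
    condExp_nonneg (ae_of_all _ fun ω => (probeZ_mem_Icc Y S τ ω).1)
  have h₁ : ∀ᵐ ω ∂μ, |probeP μ ℱ Y S τ ω| ≤ 1 :=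
    ae_bdd_abs_condExp_of_ae_bdd_abs (ae_of_all _ fun ω => abs_le.2
      ⟨by linarith [(probeZ_mem_Icc Y S τ ω).1], (probeZ_mem_Icc Y S τ ω).2⟩)
  filter_upwards [h₀, h₁] with ω h₀ h₁ using ⟨h₀, (abs_le.1 h₁).2⟩

theorem abs_probeP_sub_probeZ_le_one (S : Finset (Fin M)) (τ : ℕ) :
    ∀ᵐ ω ∂μ, |(probeP μ ℱ Y S τ - probeZ Y S τ) ω| ≤ 1 := by
  filter_upwards [probeP_mem_Icc (μ := μ) (ℱ := ℱ) (Y := Y) S τ] with ω ⟨hp₀, hp₁⟩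
  obtain ⟨hz₀, hz₁⟩ := probeZ_mem_Icc Y S τ ω
  rw [Pi.sub_apply, abs_le]
  constructor <;> linarith

theorem stronglyAdapted_probeP_sub_probeZ (hY : ∀ τ, Measurable[ℱ τ] (Y τ))
    (S : Finset (Fin M)) : StronglyAdapted ℱ fun τ => probeP μ ℱ Y S τ - probeZ Y S τ :=
  fun τ => (stronglyMeasurable_condExp.mono (ℱ.mono (Nat.sub_le τ 1))).sub
    (stronglyAdapted_probeZ hY S τ)

theorem condExp_probeP_sub_probeZ_ae_eq_zero [IsFiniteMeasure μ]
    (hY : ∀ τ, Measurable[ℱ τ] (Y τ)) (S : Finset (Fin M)) (i : ℕ) :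
    μ[probeP μ ℱ Y S (i + 1) - probeZ Y S (i + 1)|ℱ i] =ᵐ[μ] 0 := by
  have hZ : Integrable (probeZ Y S (i + 1)) μ :=
    .of_bound ((stronglyAdapted_probeZ hY S _).mono (ℱ.le _)).aestronglyMeasurable 1
      (ae_of_all _ fun ω => by
        rw [Real.norm_of_nonneg (probeZ_mem_Icc Y S _ ω).1]; exact (probeZ_mem_Icc Y S _ ω).2)
  have hP : μ[probeP μ ℱ Y S (i + 1)|ℱ i] = probeP μ ℱ Y S (i + 1) :=
    condExp_of_stronglyMeasurable (ℱ.le i) stronglyMeasurable_condExp integrable_condExp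
  filter_upwards [condExp_sub (f := probeP μ ℱ Y S (i + 1)) integrable_condExp hZ (ℱ i)] with ω h
  rw [h, Pi.sub_apply, hP]
  simp [probeP]

theorem trueMix_sub_empMix (l t : ℕ) (S : Finset (Fin M)) (ω : Ω) :
    trueMix μ ℱ Y l t S ω - empMix Y l t S ω =
      (t : ℝ)⁻¹ * ∑ τ ∈ Icc (l + 1) (l + t), (probeP μ ℱ Y S τ - probeZ Y S τ) ω := by
  simp only [trueMix, empMix, one_div, Pi.sub_apply, sum_sub_distrib, mul_sub]

theorem hasSubgaussianMGF_trueMix_sub_empMix [IsProbabilityMeasure μ]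
    (hY : ∀ τ, Measurable[ℱ τ] (Y τ)) (l t : ℕ) (S : Finset (Fin M)) :
    HasSubgaussianMGF (fun ω => trueMix μ ℱ Y l t S ω - empMix Y l t S ω) (t : ℝ≥0)⁻¹ μ := by
  have h := (HasSubgaussianMGF.sum_Icc_of_condExp_ae_eq_zero (μ := μ)
    (stronglyAdapted_probeP_sub_probeZ hY S) (abs_probeP_sub_probeZ_le_one S)
    (condExp_probeP_sub_probeZ_ae_eq_zero hY S) l t).const_mul (t : ℝ)⁻¹
  convert h using 1
  · ext ω; exact trueMix_sub_empMix l t S ω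
  · -- `t⁻¹ ^ 2 * t = t⁻¹` also at `t = 0`, where `0⁻¹ = 0`
    ext
    change (t : ℝ)⁻¹ = (t : ℝ)⁻¹ ^ 2 * t
    exact (mul_self_mul_inv _).symm.trans (by rw [inv_inv, sq])

end Probe

theorem probe_concentration_tv_general {Ω : Type*} {m0 : MeasurableSpace Ω}
    (μ : Measure Ω) [IsProbabilityMeasure μ] (ℱ : Filtration ℕ m0)
    {M : ℕ} (Y : ℕ → Ω → Fin M)
    (hY : ∀ τ, Measurable[ℱ τ] (Y τ))
    (l t : ℕ) {ε : ℝ} (hε : 0 < ε) :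
    μ {ω | ε ≤ tvMix μ ℱ Y l t ω} ≤
      ENNReal.ofReal (2 ^ (M + 1) * Real.exp (-(t : ℝ) * ε ^ 2 / 2)) := by
  have hS (S : Finset (Fin M)) : μ {ω | ε ≤ |trueMix μ ℱ Y l t S ω - empMix Y l t S ω|} ≤
      2 * ENNReal.ofReal (exp (-(t : ℝ) * ε ^ 2 / 2)) := by
    have hexp : -(t : ℝ) * ε ^ 2 / 2 = -ε ^ 2 / (2 * ((t : ℝ≥0)⁻¹ : ℝ≥0)) := by
      push_cast
      rw [← div_div, div_inv_eq_mul]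
      ring
    rw [hexp]
    exact (hasSubgaussianMGF_trueMix_sub_empMix hY l t S).measure_abs_ge_le hε.le
  calc μ {ω | ε ≤ tvMix μ ℱ Y l t ω}
      ≤ μ (⋃ S, {ω | ε ≤ |trueMix μ ℱ Y l t S ω - empMix Y l t S ω|}) :=
        measure_mono (setOf_le_iSup_subset_iUnion _ ε)
    _ ≤ ∑ S, μ {ω | ε ≤ |trueMix μ ℱ Y l t S ω - empMix Y l t S ω|} :=
        measure_iUnion_fintype_le _ _
    _ ≤ ∑ _S : Finset (Fin M), 2 * ENNReal.ofReal (exp (-(t : ℝ) * ε ^ 2 / 2)) :=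
        sum_le_sum fun S _ => hS S
    _ = ENNReal.ofReal (2 ^ (M + 1) * exp (-(t : ℝ) * ε ^ 2 / 2)) := by
        rw [sum_const, card_univ, Fintype.card_finset, Fintype.card_fin, nsmul_eq_mul,
          ENNReal.ofReal_mul (by positivity), ← mul_assoc]
        norm_num [pow_succ]

/-- **Union bound over all subsets.**
On a probability space with filtration `ℱ` and adapted probes `Y τ : Ω → Fin M`,
fix a start index `l`, a window length `t ≥ 1` and `ε > 0`.  Then
`μ( TV(P̄_l^{l+t}, P̂_l^{l+t}) ≥ ε ) ≤ 2^{M+1} exp(−t ε² / 2)`. -/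
theorem probe_concentration_tv {Ω : Type*} {m0 : MeasurableSpace Ω}
    (μ : Measure Ω) [IsProbabilityMeasure μ] (ℱ : Filtration ℕ m0)
    {M : ℕ} (hM : 1 ≤ M) (Y : ℕ → Ω → Fin M)
    (hY : ∀ τ, Measurable[ℱ τ] (Y τ))
    (l t : ℕ) (ht : 1 ≤ t) {ε : ℝ} (hε : 0 < ε) :
    μ {ω | ε ≤ tvMix μ ℱ Y l t ω} ≤
      ENNReal.ofReal (2 ^ (M + 1) * Real.exp (-(t : ℝ) * ε ^ 2 / 2)) :=
  probe_concentration_tv_general μ ℱ Y hY l t hε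
end
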